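/- The distance between two successive winds of the square root spiral tends to π: if for each k ≥ 1 one lets N(k) be the least index j with φ(j) ≥ φ(k) + 2π, where φ(k) = Σ_{n=1}^{k} arctan(1/√n), then lim_{k→∞} ( √(N(k)) − √k ) = π. -/

import Mathlib

/-!
Each angle `arctan (1 / √n)` lies between `1 / √(n + 1)` and `1 / √n`, and so does
`2 (√n - √(n - 1))` up to a shift of the index, so `φ k - 2 √k` is decreasing and bounded
below, hence convergent. Since `N k` is the first passage of `φ` past `φ k + 2π` and the steps
of `φ` tend to `0`, `φ (N k) - φ k → 2π`; subtracting the convergent `φ - 2 √·` at `N k` and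
at `k` leaves `2 (√(N k) - √k) → 2π`.
-/

open Filter Finset Real Topology

theorem one_div_sqrt_add_one_le_two_mul_sqrt_add_one_sub {a : ℝ} (ha : 0 ≤ a) :
    1 / √(a + 1) ≤ 2 * (√(a + 1) - √a) := by
  have hs : 0 < √(a + 1) := sqrt_pos.2 (by linarith)
  have hts : √a ≤ √(a + 1) := sqrt_le_sqrt (by linarith)
  rw [div_le_iff₀ hs]
  nlinarith [sq_sqrt ha, sq_sqrt (show 0 ≤ a + 1 by linarith), sq_nonneg (√(a + 1) - √a)]

theorem two_mul_sqrt_add_one_sub_le_one_div_sqrt {a : ℝ} (ha : 0 < a) :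
    2 * (√(a + 1) - √a) ≤ 1 / √a := by
  have ht : 0 < √a := sqrt_pos.2 ha
  rw [le_div_iff₀ ht]
  nlinarith [sq_sqrt ha.le, sq_sqrt (show 0 ≤ a + 1 by linarith), sq_nonneg (√(a + 1) - √a)]

theorem Real.arctan_le_self {x : ℝ} (hx : 0 ≤ x) : arctan x ≤ x := by
  simpa using le_tan (arctan_nonneg.2 hx) (arctan_lt_pi_div_two x)

theorem Real.div_sqrt_one_add_sq_le_arctan {x : ℝ} (hx : 0 ≤ x) : x / √(1 + x ^ 2) ≤ arctan x :=
  sin_arctan x ▸ sin_le (arctan_nonneg.2 hx)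

theorem one_div_sqrt_add_one_le_arctan_one_div_sqrt {b : ℝ} (hb : 0 < b) :
    1 / √(b + 1) ≤ arctan (1 / √b) := by
  convert div_sqrt_one_add_sq_le_arctan (x := 1 / √b) (by positivity) using 1
  have : 1 + (1 / √b) ^ 2 = (b + 1) / b := by
    rw [div_pow, sq_sqrt hb.le]; field_simp
  rw [this, sqrt_div' _ hb.le]
  field_simp

theorem lt_of_isLeast_le_add {φ : ℕ → ℝ} (hφ : Monotone φ) {c : ℝ} (hc : 0 < c) {k n : ℕ}
    (h : IsLeast {j | φ k + c ≤ φ j} n) : k < n :=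
  lt_of_not_ge fun hnk => by linarith [hφ hnk, h.1.out]

theorem tendsto_sub_of_isLeast_le_add {φ : ℕ → ℝ} (hφ : Monotone φ)
    (hinc : Tendsto (fun n => φ (n + 1) - φ n) atTop (𝓝 0)) {c : ℝ} (hc : 0 < c) {N : ℕ → ℕ}
    (hN : ∀ᶠ k in atTop, IsLeast {j | φ k + c ≤ φ j} (N k)) :
    Tendsto (fun k => φ (N k) - φ k) atTop (𝓝 c) := by
  have hpred : ∀ᶠ k in atTop, k ≤ N k - 1 ∧ N k - 1 + 1 = N k :=
    hN.mono fun k h => by have := lt_of_isLeast_le_add hφ hc h; omega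
  have hupper : Tendsto (fun k => c + (φ (N k - 1 + 1) - φ (N k - 1))) atTop (𝓝 c) := by
    simpa using (hinc.comp
      (tendsto_atTop_mono' _ (hpred.mono fun k h => h.1) tendsto_id)).const_add c
  refine tendsto_of_tendsto_of_tendsto_of_le_of_le' tendsto_const_nhds hupper ?_ ?_
  · filter_upwards [hN] with k h
    linarith [h.1.out]
  · filter_upwards [hN, hpred] with k h hk
    have : φ (N k - 1) < φ k + c := lt_of_not_ge fun h' => by have := h.2 h'; omega
    rw [hk.2]
    linarith

noncomputable def spiralAngle (k : ℕ) : ℝ := ∑ n ∈ Icc 1 k, arctan (1 / √n)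

theorem spiralAngle_succ (k : ℕ) :
    spiralAngle (k + 1) = spiralAngle k + arctan (1 / √(k + 1)) := by
  rw [spiralAngle, sum_Icc_succ_top (by omega), Nat.cast_succ]; rfl

theorem spiralAngle_monotone : Monotone spiralAngle :=
  monotone_nat_of_le_succ fun k => by
    rw [spiralAngle_succ]
    exact le_add_of_nonneg_right (arctan_nonneg.2 (by positivity))

theorem tendsto_spiralAngle_succ_sub :
    Tendsto (fun k => spiralAngle (k + 1) - spiralAngle k) atTop (𝓝 0) := by
  have h : Tendsto (fun k : ℕ => 1 / √((k : ℝ) + 1)) atTop (𝓝 0) := by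
    simpa only [one_div, Function.comp_def] using tendsto_inv_atTop_zero.comp
      (tendsto_sqrt_atTop.comp (tendsto_natCast_atTop_atTop.atTop_add tendsto_const_nhds))
  simpa [spiralAngle_succ, Function.comp_def] using (continuous_arctan.tendsto 0).comp h

theorem antitone_spiralAngle_sub_two_mul_sqrt :
    Antitone fun k => spiralAngle k - 2 * √k :=
  antitone_nat_of_succ_le fun k => by
    have hk : (0 : ℝ) ≤ k := k.cast_nonneg
    have := (arctan_le_self (by positivity : 0 ≤ 1 / √((k : ℝ) + 1))).trans
      (one_div_sqrt_add_one_le_two_mul_sqrt_add_one_sub hk)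
    rw [spiralAngle_succ, Nat.cast_succ]
    linarith

-- Comparing with `2 √(k + 2)` rather than `2 √k` keeps the bound
-- `2 (√(a + 1) - √a) ≤ 1 / √a` away from `a = 0`.
theorem two_mul_sqrt_add_two_sub_le_spiralAngle (k : ℕ) :
    2 * √((k : ℝ) + 2) - 2 * √2 ≤ spiralAngle k := by
  induction k with
  | zero => simp [spiralAngle]
  | succ k ih =>
    have hk : (0 : ℝ) < k + 2 := by positivity
    have h1 := two_mul_sqrt_add_one_sub_le_one_div_sqrt hk
    have h2 := one_div_sqrt_add_one_le_arctan_one_div_sqrt (by positivity : (0 : ℝ) < k + 1)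
    rw [spiralAngle_succ, Nat.cast_succ, add_right_comm]
    rw [add_assoc, one_add_one_eq_two] at h2
    linarith

theorem exists_tendsto_spiralAngle_sub_two_mul_sqrt :
    ∃ L, Tendsto (fun k => spiralAngle k - 2 * √k) atTop (𝓝 L) := by
  refine ⟨_, tendsto_atTop_ciInf antitone_spiralAngle_sub_two_mul_sqrt ⟨-(2 * √2), ?_⟩⟩
  rintro _ ⟨k, rfl⟩
  have := two_mul_sqrt_add_two_sub_le_spiralAngle k
  have := sqrt_le_sqrt (by linarith : (k : ℝ) ≤ k + 2)
  dsimp only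
  linarith

/-- The distance between two successive winds of the square root spiral tends
to `π`: if `φ(k) = ∑_{n=1}^{k} arctan(1/√n)` and, for each `k ≥ 1`, `N k` is
the least index `j` with `φ(j) ≥ φ(k) + 2π`, then `√(N k) − √k → π`. -/
theorem dist_between_successive_winds_tendsto_pi
    (φ : ℕ → ℝ)
    (hφ : ∀ k : ℕ, φ k = ∑ n ∈ (Finset.Icc 1 k : Finset ℕ), Real.arctan (1 / Real.sqrt n))
    (N : ℕ → ℕ)
    (hN : ∀ k : ℕ, 1 ≤ k →
      (φ (N k) ≥ φ k + 2 * Real.pi ∧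
        ∀ j : ℕ, φ j ≥ φ k + 2 * Real.pi → N k ≤ j)) :
    Tendsto (fun k : ℕ => Real.sqrt (N k) - Real.sqrt k) atTop
      (nhds Real.pi) := by
  obtain rfl : φ = spiralAngle := funext hφ
  have hleast : ∀ᶠ k in atTop, IsLeast {j | spiralAngle k + 2 * π ≤ spiralAngle j} (N k) :=
    eventually_atTop.2 ⟨1, hN⟩
  have hNtop : Tendsto N atTop atTop := tendsto_atTop_mono' _
    (hleast.mono fun k h => (lt_of_isLeast_le_add spiralAngle_monotone two_pi_pos h).le) tendsto_id
  have hwind := tendsto_sub_of_isLeast_le_add spiralAngle_monotone tendsto_spiralAngle_succ_sub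
    two_pi_pos hleast
  obtain ⟨L, hL⟩ := exists_tendsto_spiralAngle_sub_two_mul_sqrt
  convert (hwind.sub ((hL.comp hNtop).sub hL)).div_const 2 using 1
  · funext k
    simp only [Function.comp_apply]
    ring
  · congr 1
    ring
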